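/- Robust calibration coverage: let (X_i, Y_i), i = 1,…,n+1, be i.i.d. with values in X × Y, S a measurable score, and define W_i = sup_{x' ∈ B_ε(X_i)} S(x', Y_i). If q is the ⌈(1−α)(n+1)⌉-th smallest of W_1,…,W_n (or +∞ if this exceeds n), then P(S(X_{n+1} + δ, Y_{n+1}) ≤ q) ≥ 1 − α for any perturbation δ with ‖δ‖ ≤ ε, assuming W_1,…,W_{n+1} almost surely have no ties. -/

import Mathlib

/-
Since `‖δ‖ ≤ ε`, the perturbed test score is at most the robust score `W_{n+1}`, and `W_{n+1}` is
at most the `k`-th smallest of `W_1, …, W_n` as soon as fewer than `k` of them lie strictly below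
it, where `k = ⌈(1 - α)(n + 1)⌉`. The `W_i` are i.i.d., so their joint law is invariant under
permutations of the coordinates; without ties exactly `k` coordinates have rank below `k`, so the
rank of `W_{n+1}` is below `k` with probability `k / (n + 1) ≥ 1 - α`.
-/

open MeasureTheory

/-- Worst-case (robust) score over the `ε`-ball around the input of a data point. -/
noncomputable def robustScore {X Y : Type*} [NormedAddCommGroup X]
    (S : X → Y → ℝ) (ε : ℝ) (p : X × Y) : ℝ :=
  sSup ((fun x' => S x' p.2) '' Metric.closedBall p.1 ε)

/-- The `k`-th order statistic (0-indexed) of a finite real tuple. -/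
noncomputable def orderStat' {n : ℕ} (v : Fin n → ℝ) (k : Fin n) : ℝ :=
  v (Tuple.sort v k)

open Finset
open scoped ENNReal

section Rank
variable {α : Type*} [LinearOrder α] {n : ℕ}

def rankLT (v : Fin n → α) (m : Fin n) : ℕ := #{i | v i < v m}

lemma rankLT_lt (v : Fin n → α) (m : Fin n) : rankLT v m < n := by
  calc rankLT v m ≤ #(univ.erase m) :=
        card_le_card fun i hi => mem_erase.mpr ⟨fun h => by simp_all, mem_univ i⟩
    _ < n := by simpa using m.pos

lemma rankLT_lt_rankLT (v : Fin n → α) {a b : Fin n} (hab : v a < v b) :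
    rankLT v a < rankLT v b :=
  card_lt_card <| (ssubset_iff_of_subset fun i hi => by
    simp only [mem_filter, mem_univ, true_and] at hi ⊢; exact hi.trans hab).mpr
    ⟨a, by simpa using hab, by simp⟩

lemma rankLT_comp_perm (v : Fin n → α) (e : Equiv.Perm (Fin n)) (m : Fin n) :
    rankLT (v ∘ e) m = rankLT v (e m) :=
  card_bij' (fun i _ => e i) (fun i _ => e.symm i) (by simp) (by simp) (by simp) (by simp)

lemma rankLT_injective {v : Fin n → α} (hv : Function.Injective v) :
    Function.Injective fun m => (⟨rankLT v m, rankLT_lt v m⟩ : Fin n) := by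
  intro a b hab
  have hab : rankLT v a = rankLT v b := congrArg Fin.val hab
  rcases lt_trichotomy (v a) (v b) with h | h | h
  · exact absurd hab (rankLT_lt_rankLT v h).ne
  · exact hv h
  · exact absurd hab (rankLT_lt_rankLT v h).ne'

lemma card_rankLT_lt {v : Fin n → α} (hv : Function.Injective v) {k : ℕ} (hk : k ≤ n) :
    #{m | rankLT v m < k} = k := by
  set r := fun m => (⟨rankLT v m, rankLT_lt v m⟩ : Fin n)
  have hr : Function.Bijective r := (rankLT_injective hv).bijective_of_finite
  calc #{m | rankLT v m < k} = #{j : Fin n | (j : ℕ) < k} :=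
        card_nbij r (fun m hm => by simpa using hm) hr.injective.injOn
          (fun j hj => by obtain ⟨m, rfl⟩ := hr.surjective j; exact ⟨m, by simpa using hj, rfl⟩)
    _ = k := by simp [Fin.card_filter_val_lt, hk]

lemma rankLT_last (v : Fin (n + 1) → α) :
    rankLT v (Fin.last n) = #{i : Fin n | v i.castSucc < v (Fin.last n)} := by
  rw [rankLT, card_filter, card_filter, Fin.sum_univ_castSucc]
  simp

end Rank

lemma le_orderStat'_of_card_filter_lt_le {n : ℕ} (w : Fin n → ℝ) (t : ℝ) {k : ℕ} (hk : k < n)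
    (hcount : #{i | w i < t} ≤ k) : t ≤ orderStat' w ⟨k, hk⟩ := by
  by_contra! hlt
  have hsub : (Iic (⟨k, hk⟩ : Fin n)).map (Tuple.sort w).toEmbedding ⊆
      ({i | w i < t} : Finset (Fin n)) := by
    intro i hi
    obtain ⟨j, hj, rfl⟩ := mem_map.mp hi
    simpa using (Tuple.monotone_sort w (mem_Iic.mp hj)).trans_lt hlt
  have := card_le_card hsub
  simp only [card_map, Fin.card_Iic] at this
  omega

lemma le_orderStat'_of_rankLT_last_le {n : ℕ} (v : Fin (n + 1) → ℝ) {k : ℕ} (hk : k < n)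
    (hrank : rankLT v (Fin.last n) ≤ k) :
    v (Fin.last n) ≤ orderStat' (fun i : Fin n => v i.castSucc) ⟨k, hk⟩ :=
  le_orderStat'_of_card_filter_lt_le _ _ hk (rankLT_last v ▸ hrank)

lemma le_robustScore {X Y : Type*} [NormedAddCommGroup X] {S : X → Y → ℝ} {ε : ℝ} {p : X × Y}
    (hbdd : BddAbove ((fun x' => S x' p.2) '' Metric.closedBall p.1 ε)) {δ : X} (hδ : ‖δ‖ ≤ ε) :
    S (p.1 + δ) p.2 ≤ robustScore S ε p :=
  le_csSup hbdd ⟨p.1 + δ, by simpa [dist_eq_norm] using hδ, rfl⟩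

lemma MeasureTheory.Measure.map_comp_perm_pi {ι β : Type*} [Fintype ι] [MeasurableSpace β]
    (ν : Measure β) [SigmaFinite ν] (e : Equiv.Perm ι) :
    (Measure.pi fun _ : ι => ν).map (· ∘ e) = Measure.pi fun _ => ν := by
  have h := (measurePreserving_piCongrLeft (fun _ : ι => ν) e.symm).map_eq
  convert h using 2
  ext v i
  simp [MeasurableEquiv.coe_piCongrLeft, Equiv.piCongrLeft_apply]

lemma ProbabilityTheory.iIndepFun.map_comp_perm {Ω ι β : Type*} [Fintype ι] [MeasurableSpace Ω]
    [MeasurableSpace β] {P : Measure Ω} {W : ι → Ω → β} (hindep : ProbabilityTheory.iIndepFun W P)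
    (hW : ∀ i, AEMeasurable (W i) P) {ν : Measure β} [SigmaFinite ν]
    (hident : ∀ i, P.map (W i) = ν) (e : Equiv.Perm ι) :
    (P.map fun ω i => W i ω).map (· ∘ e) = P.map fun ω i => W i ω := by
  have hlaw : (P.map fun ω i => W i ω) = Measure.pi fun _ => ν := by
    rw [hindep.map_fun_eq_pi_map hW]
    simp only [hident]
  rw [hlaw, Measure.map_comp_perm_pi]

lemma measurableSet_rankLT_lt {n : ℕ} (m : Fin n) (k : ℕ) :
    MeasurableSet {v : Fin n → ℝ | rankLT v m < k} := by
  have hrank : Measurable fun v : Fin n → ℝ => rankLT v m := by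
    simp only [rankLT, card_filter]
    exact Finset.measurable_sum _ fun i _ => Measurable.ite
      (measurableSet_lt (measurable_pi_apply i) (measurable_pi_apply m)) measurable_const
      measurable_const
  exact hrank measurableSet_Iio

lemma ae_injective_of_measure_eq_zero {ι β : Type*} [Countable ι] [MeasurableSpace β]
    {μ : Measure (ι → β)} (hties : ∀ i j, i ≠ j → μ {v | v i = v j} = 0) :
    ∀ᵐ v ∂μ, Function.Injective v := by
  simp only [Function.Injective, ae_all_iff]
  intro i j
  by_cases hij : i = j
  · exact Filter.Eventually.of_forall fun _ _ => hij
  · exact measure_mono_null (fun v hv => by simpa [hij] using hv) (hties i j hij)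

lemma measure_rankLT_lt {n : ℕ} {μ : Measure (Fin n → ℝ)} [IsProbabilityMeasure μ]
    (hexch : ∀ e : Equiv.Perm (Fin n), μ.map (· ∘ e) = μ)
    (hties : ∀ i j, i ≠ j → μ {v | v i = v j} = 0) {k : ℕ} (hk : k ≤ n) (m : Fin n) :
    μ {v | rankLT v m < k} = k / n := by
  have hsymm : ∀ m', μ {v | rankLT v m' < k} = μ {v | rankLT v m < k} := by
    intro m'
    conv_lhs => rw [← hexch (Equiv.swap m' m)]
    rw [Measure.map_apply (by fun_prop) (measurableSet_rankLT_lt m' k)]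
    simp [Set.preimage, rankLT_comp_perm]
  have hsum : ∑ m', μ {v | rankLT v m' < k} = k := by
    calc ∑ m', μ {v | rankLT v m' < k}
        = ∫⁻ v, ∑ m', {v | rankLT v m' < k}.indicator 1 v ∂μ := by
          rw [lintegral_finsetSum _ fun m' _ =>
            measurable_one.indicator (measurableSet_rankLT_lt m' k)]
          simp only [lintegral_indicator_one (measurableSet_rankLT_lt _ k)]
      _ = ∫⁻ _, (k : ℝ≥0∞) ∂μ := by
          refine lintegral_congr_ae ((ae_injective_of_measure_eq_zero hties).mono fun v hv => ?_)
          simp only [Set.indicator_apply, Set.mem_ofPred_eq, Pi.one_apply, sum_boole,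
            card_rankLT_lt hv hk]
      _ = k := by simp
  rw [sum_congr rfl fun m' _ => hsymm m', sum_const, card_univ, Fintype.card_fin,
    nsmul_eq_mul] at hsum
  exact (ENNReal.eq_div_iff (by simpa using m.pos.ne') (by simp)).mpr hsum

theorem stmt_10 {Ω X Y : Type*} [MeasurableSpace Ω]
    [NormedAddCommGroup X] [MeasurableSpace X] [MeasurableSpace Y]
    (P : Measure Ω) [IsProbabilityMeasure P]
    (n : ℕ) (hn : 0 < n) (α : ℝ) (hα : α ∈ Set.Ioo (0:ℝ) 1)
    (ε : ℝ) (δ : X) (hδ : ‖δ‖ ≤ ε)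
    (S : X → Y → ℝ)
    (hSrob : Measurable (fun p : X × Y => robustScore S ε p))
    (hbdd : ∀ (x : X) (y : Y), BddAbove ((fun x' => S x' y) '' Metric.closedBall x ε))
    (Z : Fin (n + 1) → Ω → X × Y) (hZmeas : ∀ i, Measurable (Z i))
    (hindep : ProbabilityTheory.iIndepFun Z P)
    (hident : ∀ i j, Measure.map (Z i) P = Measure.map (Z j) P)
    (hties : ∀ i j, i ≠ j →
      P {ω | robustScore S ε (Z i ω) = robustScore S ε (Z j ω)} = 0) :
    1 - α ≤ (P {ω |
      if h : ⌈(1 - α) * (n + 1)⌉₊ ≤ n then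
        S ((Z (Fin.last n) ω).1 + δ) (Z (Fin.last n) ω).2 ≤
          orderStat' (fun i : Fin n => robustScore S ε (Z (Fin.castSucc i) ω))
            ⟨⌈(1 - α) * (n + 1)⌉₊ - 1, by omega⟩
      else True}).toReal := by
  by_cases hkn : ⌈(1 - α) * (n + 1)⌉₊ ≤ n
  swap
  · simp only [dif_neg hkn, Set.ofPred_true, measure_univ, ENNReal.toReal_one]
    linarith [hα.1]
  simp only [dif_pos hkn]
  set k := ⌈(1 - α) * ((n : ℝ) + 1)⌉₊
  set W : Fin (n + 1) → Ω → ℝ := fun i => (fun p => robustScore S ε p) ∘ Z i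
  have hWmeas : Measurable fun ω i => W i ω := measurable_pi_lambda _ fun i => hSrob.comp (hZmeas i)
  have hWident (i : Fin (n + 1)) : P.map (W i) = P.map (W 0) := by
    simp only [W, ← Measure.map_map hSrob (hZmeas _), hident i 0]
  have : IsProbabilityMeasure (P.map (W 0)) :=
    Measure.isProbabilityMeasure_map (hSrob.comp (hZmeas 0)).aemeasurable
  have : IsProbabilityMeasure (P.map fun ω i => W i ω) :=
    Measure.isProbabilityMeasure_map hWmeas.aemeasurable
  have hexch := (hindep.comp _ fun _ => hSrob).map_comp_perm
    (fun i => (hSrob.comp (hZmeas i)).aemeasurable) hWident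
  have hnoties (i j : Fin (n + 1)) (hij : i ≠ j) :
      P.map (fun ω i => W i ω) {v | v i = v j} = 0 := by
    rw [Measure.map_apply hWmeas (measurableSet_eq_fun (measurable_pi_apply i)
      (measurable_pi_apply j))]
    exact hties i j hij
  have hrank := measure_rankLT_lt hexch hnoties (show k ≤ n + 1 by omega) (Fin.last n)
  have hcover : (fun ω i => W i ω) ⁻¹' {v | rankLT v (Fin.last n) < k} ⊆ {ω |
      S ((Z (Fin.last n) ω).1 + δ) (Z (Fin.last n) ω).2 ≤
        orderStat' (fun i : Fin n => robustScore S ε (Z (Fin.castSucc i) ω))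
          ⟨k - 1, by omega⟩} := fun ω hω =>
    (le_robustScore (hbdd _ _) hδ).trans
      (le_orderStat'_of_rankLT_last_le (W · ω) _ (Nat.le_sub_one_of_lt hω))
  calc 1 - α ≤ (k : ℝ) / (n + 1) := by
        rw [le_div_iff₀ (by positivity)]
        exact Nat.le_ceil _
    _ = (P.map (fun ω i => W i ω) {v | rankLT v (Fin.last n) < k}).toReal := by
        rw [hrank]
        simp [ENNReal.toReal_div]
        norm_cast
    _ ≤ _ := by
        rw [Measure.map_apply hWmeas (measurableSet_rankLT_lt _ k)]
        exact ENNReal.toReal_mono (measure_ne_top P _) (measure_mono hcover)
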